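/- For a Coxeter system (W,S), define the monoid M(W) generated by elements m(w), w ∈ W, with relations m(s)m(w) = m(sw) if ℓ(sw) > ℓ(w) and m(s)m(w) = m(w) if ℓ(sw) < ℓ(w), for s ∈ S. Then for every s ∈ S, m(s)² = m(s), and the generators m(s) for s ∈ S satisfy the braid relations of (W,S). -/

import Mathlib

/-!
`m(s) m(s) = m(s)` is the second relation with `w = s`. For the braid relations, the first
relation shows that the product of the `m(s_k)` along a reduced word `ω` is `m(π ω)`; both braid
words of length `M i j` have the same product in `W`, so it suffices that they are reduced.

By Tits' argument, the involutions `(t, ε) ↦ (s t s, ±ε)` of `W × ℤˣ`, with the sign flipped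
exactly when `t = s`, satisfy the Coxeter relations. Hence the parity of the number of
occurrences of `t` in the right inversion sequence of a word depends only on the product of the
word, which gives the exchange property: a left descent `s` of `π ω` occurs in the left inversion
sequence of `ω`. So a word whose left inversion sequence has no repetitions is reduced. For the
braid word this sequence is `s_i (s_j s_i) ^ k`, `k < M i j`, without repetitions because
`s_i s_j` has order exactly `M i j`: in the geometric representation, `σ_i σ_j` acts on the plane
of the simple roots `α_i, α_j` as the rotation by `2π / M i j`.
-/

open Polynomial Polynomial.Chebyshev Real

namespace Polynomial.Chebyshev

variable {R : Type*} [CommRing R]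

theorem S_eval_two_mul_and_two_mul_sub_one (x : R) (n : ℕ) :
    (S R (2 * n)).eval x = (S R n).eval (x ^ 2 - 2) + (S R (n - 1)).eval (x ^ 2 - 2) ∧
      (S R (2 * n - 1)).eval x = x * (S R (n - 1)).eval (x ^ 2 - 2) := by
  induction n with
  | zero => simp
  | succ n ih =>
    have hodd : (S R (2 * n + 1)).eval x = x * (S R n).eval (x ^ 2 - 2) := by
      rw [S_add_one, eval_sub, eval_mul, eval_X, ih.1, ih.2]
      ring
    push_cast
    refine ⟨?_, by rwa [show 2 * ((n : ℤ) + 1) - 1 = 2 * n + 1 by ring, add_sub_cancel_right]⟩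
    rw [show 2 * ((n : ℤ) + 1) = 2 * n + 1 + 1 by ring, S_add_one R (2 * n + 1),
      add_sub_cancel_right, eval_sub, eval_mul, eval_X, hodd, ih.1, S_add_one R n, eval_sub,
      eval_mul, eval_X, add_sub_cancel_right]
    ring

end Polynomial.Chebyshev

namespace CoxeterMatrix

variable {B : Type*} (M : CoxeterMatrix B)

/-- `2 B(α_i, ·)` for the bilinear form `B(α_i, α_j) = -cos (π / M i j)` on `B →₀ ℝ`, where
`α_j = Finsupp.single j 1`. For `M i j = 0`, `π / 0 = 0` gives `B(α_i, α_j) = -1`, the usual value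
for `m = ∞`. -/
noncomputable def simpleCoroot (i : B) : Module.Dual ℝ (B →₀ ℝ) :=
  Finsupp.linearCombination ℝ fun j => -2 * cos (π / M i j)

theorem simpleCoroot_single (i j : B) :
    M.simpleCoroot i (Finsupp.single j 1) = -2 * cos (π / M i j) := by
  simp [simpleCoroot]

theorem simpleCoroot_single_self (i : B) : M.simpleCoroot i (Finsupp.single i 1) = 2 := by
  simp [simpleCoroot_single]

noncomputable def geometricReflection (i : B) : (B →₀ ℝ) ≃ₗ[ℝ] (B →₀ ℝ) :=
  Module.reflection (M.simpleCoroot_single_self i)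

theorem geometricReflection_inv (i : B) : (M.geometricReflection i)⁻¹ = M.geometricReflection i :=
  Module.reflection_inv _

theorem sin_smul_geometricReflection_mul_pow_apply_single (i j : B) (p : ℕ) :
    sin (π / M i j) • ((M.geometricReflection i * M.geometricReflection j) ^ p)
        (Finsupp.single i 1) =
      sin ((2 * p + 1) * (π / M i j)) • Finsupp.single i 1 +
        sin (2 * p * (π / M i j)) • Finsupp.single j 1 := by
  set θ := π / M i j
  have hcos : M.simpleCoroot j (Finsupp.single i 1) = -2 * cos θ := by
    rw [simpleCoroot_single, M.symmetric]
  -- `reflection_mul_reflection_pow_apply_self` evaluates `S` at `(2 cos θ) ^ 2 - 2 = 2 cos 2θ`;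
  -- moving to `2 cos θ` lets us divide by `sin θ`, which is nonzero also when `M i j = 2`
  obtain ⟨heven, hodd⟩ := S_eval_two_mul_and_two_mul_sub_one (2 * cos θ) p
  rw [geometricReflection, geometricReflection,
    Module.reflection_mul_reflection_pow_apply_self _ _ p ((2 * cos θ) ^ 2 - 2)
      (by rw [hcos, simpleCoroot_single]; ring),
    hcos, ← heven, smul_add, smul_smul, smul_smul]
  have h1 := S_two_mul_real_cos θ (2 * p)
  have h2 := S_two_mul_real_cos θ (2 * p - 1)
  push_cast at h1 h2
  rw [sub_add_cancel] at h2
  congr 2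
  · rw [mul_comm, h1]
  · rw [mul_comm, ← h2]
    linear_combination (-sin θ) * hodd

variable {M}

theorem sin_pi_div_pos {i j : B} (h : 2 ≤ M i j) : 0 < sin (π / M i j) := by
  have h2 : (2 : ℝ) ≤ M i j := by exact_mod_cast h
  apply sin_pos_of_pos_of_lt_pi (by positivity)
  exact div_lt_self pi_pos (by linarith)

theorem geometricReflection_mul_pow_apply_single_self {i j : B} (h : 2 ≤ M i j) :
    ((M.geometricReflection i * M.geometricReflection j) ^ M i j) (Finsupp.single i 1) =
      Finsupp.single i 1 := by
  have hsin := M.sin_smul_geometricReflection_mul_pow_apply_single i j (M i j)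
  have hm : (M i j : ℝ) * (π / M i j) = π := mul_div_cancel₀ _ (by positivity)
  rw [show (2 * (M i j : ℝ) + 1) * (π / M i j) = π / M i j + 2 * π by linear_combination 2 * hm,
    show 2 * (M i j : ℝ) * (π / M i j) = 2 * π by linear_combination 2 * hm, sin_add_two_pi,
    sin_two_pi, zero_smul, add_zero] at hsin
  exact smul_right_injective _ (sin_pi_div_pos h).ne' hsin

theorem geometricReflection_mul_pow_apply_single_ne {i j : B} (hij : i ≠ j) {d : ℕ}
    (hd0 : 0 < d) (hd : d < M i j) :
    ((M.geometricReflection i * M.geometricReflection j) ^ d) (Finsupp.single i 1) ≠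
      Finsupp.single i 1 := by
  intro hfix
  have hsin := M.sin_smul_geometricReflection_mul_pow_apply_single i j d
  rw [hfix] at hsin
  have hi := congrArg (· i) hsin
  have hj := congrArg (· j) hsin
  simp only [Finsupp.smul_apply, Finsupp.add_apply, Finsupp.single_eq_same,
    Finsupp.single_eq_of_ne hij, Finsupp.single_eq_of_ne hij.symm, smul_eq_mul, mul_one,
    mul_zero, add_zero, zero_add] at hi hj
  set θ := π / M i j
  have hcos : cos (2 * d * θ) = 1 := by
    have hpos : 0 < sin θ := sin_pi_div_pos (by omega)
    rw [add_mul, one_mul, sin_add, ← hj, zero_mul, zero_add] at hi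
    nlinarith
  obtain ⟨n, hn⟩ := (cos_eq_one_iff _).1 hcos
  have hnd : n * (M i j : ℤ) = d := by
    have hM : (M i j : ℝ) ≠ 0 := by exact_mod_cast (by omega : M i j ≠ 0)
    have hm : (M i j : ℝ) * θ = π := mul_div_cancel₀ _ hM
    have : ((n * M i j : ℤ) : ℝ) * π = d * π := by
      push_cast
      linear_combination (M i j : ℝ) / 2 * hn + d * hm
    exact_mod_cast mul_right_cancel₀ pi_ne_zero this
  have : (d : ℤ) < M i j := by exact_mod_cast hd
  rcases le_or_gt n 0 with hn0 | hn0 <;> nlinarith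

theorem exists_eq_add_smul_single_add_smul_single {i j : B} (h : 2 ≤ M i j) (v : B →₀ ℝ) :
    ∃ (u : B →₀ ℝ) (a b : ℝ), v = u + a • Finsupp.single i 1 + b • Finsupp.single j 1 ∧
      M.simpleCoroot i u = 0 ∧ M.simpleCoroot j u = 0 := by
  set c := cos (π / M i j)
  -- the Gram matrix `!![1, -c; -c, 1]` of the two simple roots is invertible
  have hc : 1 - c ^ 2 ≠ 0 := by
    nlinarith [sin_sq_add_cos_sq (π / M i j), sin_pi_div_pos h]
  have hij : M.simpleCoroot i (Finsupp.single j 1) = -2 * c := M.simpleCoroot_single i j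
  have hji : M.simpleCoroot j (Finsupp.single i 1) = -2 * c := by
    rw [simpleCoroot_single, M.symmetric]
  set a := (M.simpleCoroot i v + c * M.simpleCoroot j v) / (2 * (1 - c ^ 2))
  set b := (M.simpleCoroot j v + c * M.simpleCoroot i v) / (2 * (1 - c ^ 2))
  refine ⟨v - a • Finsupp.single i 1 - b • Finsupp.single j 1, a, b, by abel, ?_, ?_⟩
  · simp only [map_sub, map_smul, hij, simpleCoroot_single_self, smul_eq_mul, a, b]
    field_simp
    ring
  · simp only [map_sub, map_smul, hji, simpleCoroot_single_self, smul_eq_mul, a, b]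
    field_simp
    ring

theorem geometricReflection_mul_pow_eq_one {i j : B} (h : 2 ≤ M i j) :
    (M.geometricReflection i * M.geometricReflection j) ^ M i j = 1 := by
  set T := (M.geometricReflection i * M.geometricReflection j) ^ M i j
  have hTi : T (Finsupp.single i 1) = Finsupp.single i 1 :=
    geometricReflection_mul_pow_apply_single_self h
  have hTj : T (Finsupp.single j 1) = Finsupp.single j 1 := by
    have hji := geometricReflection_mul_pow_apply_single_self (M.symmetric i j ▸ h)
    rw [M.symmetric j i] at hji
    have hT : T = ((M.geometricReflection j * M.geometricReflection i) ^ M i j)⁻¹ := by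
      rw [← inv_pow, mul_inv_rev, geometricReflection_inv, geometricReflection_inv]
    rw [hT, LinearEquiv.coe_inv, LinearEquiv.symm_apply_eq, hji]
  refine LinearEquiv.ext fun v => ?_
  obtain ⟨u, a, b, rfl, hiu, hju⟩ := exists_eq_add_smul_single_add_smul_single h v
  have hTu : T u = u := by
    have : (M.geometricReflection i * M.geometricReflection j) u = u := by
      simp [geometricReflection, Module.reflection_apply, hiu, hju]
    rw [LinearEquiv.coe_pow, Function.iterate_fixed this]
  rw [map_add, map_add, map_smul, map_smul, hTu, hTi, hTj]
  rfl

theorem isLiftable_geometricReflection : M.IsLiftable M.geometricReflection := by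
  intro i j
  rcases eq_or_ne i j with rfl | hij
  · rw [M.diagonal, pow_one, mul_eq_one_iff_eq_inv, geometricReflection_inv]
  rcases Nat.lt_or_ge (M i j) 2 with h | h
  · have : M i j = 0 := by have := M.off_diagonal i j hij; omega
    rw [this, pow_zero]
  · exact geometricReflection_mul_pow_eq_one h

end CoxeterMatrix

namespace CoxeterSystem

variable {B W : Type*} [Group W] {M : CoxeterMatrix B} (cs : CoxeterSystem M W)

noncomputable def geometricRepresentation : W →* (B →₀ ℝ) ≃ₗ[ℝ] (B →₀ ℝ) :=
  cs.lift ⟨M.geometricReflection, M.isLiftable_geometricReflection⟩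

@[simp]
theorem geometricRepresentation_simple (i : B) :
    cs.geometricRepresentation (cs.simple i) = M.geometricReflection i :=
  cs.lift_apply_simple _ i

theorem orderOf_simple_mul_simple {i j : B} (h : M i j ≠ 0) :
    orderOf (cs.simple i * cs.simple j) = M i j := by
  refine (orderOf_eq_iff (Nat.pos_of_ne_zero h)).2
    ⟨cs.simple_mul_simple_pow i j, fun d hd hd0 hpow => ?_⟩
  have hij : i ≠ j := by
    rintro rfl
    rw [M.diagonal] at hd
    omega
  apply M.geometricReflection_mul_pow_apply_single_ne hij hd0 hd
  simpa using congrArg (cs.geometricRepresentation · (Finsupp.single i 1)) hpow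

theorem prod_map_alternatingWord_two_mul {G : Type*} [Monoid G] (f : B → G) (i j : B) (n : ℕ) :
    ((alternatingWord i j (2 * n)).map f).prod = (f i * f j) ^ n := by
  induction n with
  | zero => simp [alternatingWord]
  | succ n ih =>
    rw [show 2 * (n + 1) = 2 * n + 1 + 1 by ring, alternatingWord_succ', alternatingWord_succ']
    simp [ih, pow_succ', mul_assoc]

theorem wordProd_alternatingWord_two_mul (i j : B) (n : ℕ) :
    cs.wordProd (alternatingWord i j (2 * n)) = (cs.simple i * cs.simple j) ^ n :=
  prod_map_alternatingWord_two_mul cs.simple i j n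

theorem rightInvSeq_alternatingWord_two_mul (i j : B) (n : ℕ) :
    cs.rightInvSeq (alternatingWord i j (2 * n)) =
      ((List.range (2 * n)).map (cs.simple j * (cs.simple i * cs.simple j) ^ ·)).reverse := by
  set q := cs.simple i * cs.simple j with hq
  have hconj (n : ℕ) : (q ^ n)⁻¹ = cs.simple j * q ^ n * cs.simple j := by
    have : q⁻¹ = cs.simple j * q * (cs.simple j)⁻¹ := by simp [hq, mul_assoc]
    rw [← inv_pow, this, conj_pow, inv_simple]
  induction n with
  | zero => simp [alternatingWord]
  | succ n ih =>
    rw [show 2 * (n + 1) = 2 * n + 1 + 1 by ring, alternatingWord_succ', alternatingWord_succ']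
    simp only [Nat.even_add_one, even_two_mul, not_true_eq_false, if_true, if_false, rightInvSeq,
      wordProd_cons, wordProd_alternatingWord_two_mul, ← hq, ih, List.range_succ, List.map_append,
      List.map_cons, List.map_nil, List.reverse_append, List.reverse_cons, List.reverse_nil,
      List.nil_append, List.cons_append, List.cons.injEq, and_true]
    constructor
    · rw [mul_inv_rev, inv_simple, hconj]
      simp only [mul_assoc, simple_mul_simple_cancel_left]
      rw [← mul_assoc (cs.simple i), ← hq, ← pow_succ', ← pow_add]
      ring_nf
    · rw [hconj]
      simp only [mul_assoc, simple_mul_simple_cancel_left]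
      rw [← pow_add, two_mul]

section SignRepresentation

variable [DecidableEq W]

theorem even_count_rightInvSeq_alternatingWord (i j : B) (t : W) :
    Even ((cs.rightInvSeq (alternatingWord i j (2 * M i j))).count t) := by
  have hper (r : ℕ) : cs.simple j * (cs.simple i * cs.simple j) ^ (M i j + r) =
      cs.simple j * (cs.simple i * cs.simple j) ^ r := by
    rw [pow_add, simple_mul_simple_pow, one_mul]
  rw [rightInvSeq_alternatingWord_two_mul, List.count_reverse, two_mul, List.range_add,
    List.map_append, List.map_map, Function.comp_def]
  simp only [hper, List.count_append, Even.add_self]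

def signPerm (i : B) : Equiv.Perm (W × ℤˣ) :=
  Function.Involutive.toPerm
    (fun p => (cs.simple i * p.1 * cs.simple i, if p.1 = cs.simple i then -p.2 else p.2))
    (by
      rintro ⟨t, ε⟩
      by_cases ht : t = cs.simple i <;> simp [ht, mul_assoc, mul_eq_one_iff_eq_inv])

theorem prod_map_signPerm_apply (ω : List B) (t : W) (ε : ℤˣ) :
    (ω.map cs.signPerm).prod (t, ε) =
      (cs.wordProd ω * t * (cs.wordProd ω)⁻¹, (-1) ^ (cs.rightInvSeq ω).count t * ε) := by
  induction ω with
  | nil => simp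
  | cons i ω ih =>
    rw [List.map_cons, List.prod_cons, Equiv.Perm.mul_apply, ih]
    have hiff : cs.wordProd ω * t * (cs.wordProd ω)⁻¹ = cs.simple i ↔
        (cs.wordProd ω)⁻¹ * cs.simple i * cs.wordProd ω = t := by
      constructor
      · rintro h
        rw [← h]
        group
      · rintro rfl
        group
    simp only [signPerm, Function.Involutive.toPerm, Equiv.coe_fn_mk, rightInvSeq,
      List.count_cons, beq_iff_eq, ← hiff]
    split_ifs <;> simp [pow_succ, wordProd_cons, mul_assoc]

theorem isLiftable_signPerm : M.IsLiftable cs.signPerm := by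
  intro i j
  ext1 ⟨t, ε⟩
  rw [← prod_map_alternatingWord_two_mul, prod_map_signPerm_apply,
    wordProd_alternatingWord_two_mul, simple_mul_simple_pow,
    (cs.even_count_rightInvSeq_alternatingWord i j t).neg_one_pow]
  simp

def signRepresentation : W →* Equiv.Perm (W × ℤˣ) :=
  cs.lift ⟨cs.signPerm, cs.isLiftable_signPerm⟩

theorem signRepresentation_wordProd (ω : List B) :
    cs.signRepresentation (cs.wordProd ω) = (ω.map cs.signPerm).prod := by
  rw [wordProd, map_list_prod, List.map_map]
  congr 1
  exact List.map_congr_left fun i _ => cs.lift_apply_simple cs.isLiftable_signPerm i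

theorem neg_one_pow_count_rightInvSeq_eq {ω ω' : List B} (h : cs.wordProd ω = cs.wordProd ω')
    (t : W) :
    (-1 : ℤˣ) ^ (cs.rightInvSeq ω).count t = (-1) ^ (cs.rightInvSeq ω').count t := by
  simpa [signRepresentation_wordProd, prod_map_signPerm_apply] using
    congrArg (fun w => (cs.signRepresentation w (t, 1)).2) h

end SignRepresentation

theorem simple_mem_leftInvSeq_of_length_lt {ω : List B} {k : B}
    (h : cs.length (cs.simple k * cs.wordProd ω) < cs.length (cs.wordProd ω)) :
    cs.simple k ∈ cs.leftInvSeq ω := by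
  classical
  obtain ⟨ν, hν, hνω⟩ := cs.exists_isReduced ((cs.wordProd ω)⁻¹ * cs.simple k)
  have hkν : cs.simple k ∉ cs.rightInvSeq ν := fun hk => by
    have := (cs.isRightInversion_of_mem_rightInvSeq hν hk).2
    rw [← hνω, simple_mul_simple_cancel_right, length_inv, ← inv_simple, ← mul_inv_rev,
      length_inv] at this
    omega
  have hcount : (cs.rightInvSeq (ν.concat k)).count (cs.simple k) = 1 := by
    rw [rightInvSeq_concat, List.count_concat_self, List.count_eq_zero.2, zero_add]
    intro hk
    obtain ⟨x, hx, hxk⟩ := List.mem_map.1 hk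
    have hxk' : x = cs.simple k := (MulAut.conj (cs.simple k)).injective (by simp [hxk])
    exact hkν (hxk' ▸ hx)
  have hword : cs.wordProd (ν.concat k) = cs.wordProd ω.reverse := by
    rw [wordProd_concat, ← hνω, wordProd_reverse, simple_mul_simple_cancel_right]
  have := cs.neg_one_pow_count_rightInvSeq_eq hword (cs.simple k)
  rw [hcount, rightInvSeq_reverse, List.count_reverse] at this
  by_contra hk
  rw [List.count_eq_zero_of_not_mem hk] at this
  simp at this

theorem isReduced_of_nodup_leftInvSeq {ω : List B} (h : (cs.leftInvSeq ω).Nodup) :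
    cs.IsReduced ω := by
  induction ω with
  | nil => simp [IsReduced]
  | cons k ω ih =>
    rw [leftInvSeq, List.nodup_cons] at h
    have hω : cs.IsReduced ω := ih h.2.of_map
    rcases cs.length_simple_mul (cs.wordProd ω) k with hlen | hlen
    · rw [IsReduced, wordProd_cons, hlen, hω.eq, List.length_cons]
    · have hk := cs.simple_mem_leftInvSeq_of_length_lt (ω := ω) (k := k) (by omega)
      exact absurd (List.mem_map.2 ⟨_, hk, by simp⟩) h.1

theorem leftInvSeq_alternatingWord_two_mul (i j : B) (n : ℕ) :
    cs.leftInvSeq (alternatingWord i j (2 * n)) =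
      (List.range (2 * n)).map fun k => cs.simple i * (cs.simple j * cs.simple i) ^ k := by
  refine List.ext_getElem (by simp) fun k h₁ h₂ => ?_
  rw [getElem_leftInvSeq_alternatingWord cs i j n k (by simpa using h₂),
    prod_alternatingWord_eq_mul_pow]
  simp [Nat.add_div_of_dvd_right]

theorem isReduced_braidWord {i j : B} (h : M i j ≠ 0) : cs.IsReduced (braidWord M i j) := by
  have key (a b : B) (hab : M a b ≠ 0) :
      cs.IsReduced ((alternatingWord a b (2 * M a b)).take (M a b)) := by
    apply isReduced_of_nodup_leftInvSeq
    rw [leftInvSeq_take, leftInvSeq_alternatingWord_two_mul, ← List.map_take, List.take_range,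
      min_eq_left (by omega)]
    refine List.nodup_range.map_on fun x hx y hy hxy => ?_
    rw [← M.symmetric, ← cs.orderOf_simple_mul_simple (M.symmetric a b ▸ hab)] at hx hy
    exact pow_injOn_Iio_orderOf (by simpa using hx) (by simpa using hy) (mul_left_cancel hxy)
  rcases Nat.even_or_odd (M i j) with he | ho
  · simpa [listTake_alternatingWord i j _ _ (by omega : M i j < 2 * M i j), he] using key i j h
  · have := key j i (by rwa [M.symmetric])
    rwa [M.symmetric j i, listTake_alternatingWord j i _ _ (by omega),
      if_neg (Nat.not_even_iff_odd.2 ho)] at this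

theorem prod_map_eq_of_isReduced {N : Type*} [Monoid N] (m : W → N)
    (hgt : ∀ (i : B) (w : W), cs.length (cs.simple i * w) > cs.length w →
      m (cs.simple i) * m w = m (cs.simple i * w))
    {ω : List B} (hω : cs.IsReduced ω) (hne : ω ≠ []) :
    (ω.map fun k => m (cs.simple k)).prod = m (cs.wordProd ω) := by
  induction ω with
  | nil => exact absurd rfl hne
  | cons k ω ih =>
    rcases eq_or_ne ω [] with rfl | hω'
    · simp
    have hred : cs.IsReduced ω := by simpa using hω.drop 1
    have hup : cs.length (cs.simple k * cs.wordProd ω) > cs.length (cs.wordProd ω) := by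
      rw [← wordProd_cons, hω.eq, hred.eq, List.length_cons]
      omega
    rw [List.map_cons, List.prod_cons, ih hred hω', hgt k _ hup, wordProd_cons]

end CoxeterSystem

/-- Let `(W,S)` be a Coxeter system and let `m : W → N` be a map
to a monoid `N` satisfying the defining relations of the 0-Hecke monoid
`M(W)`: `m(s) * m(w) = m(sw)` if `ℓ(sw) > ℓ(w)` and `m(s) * m(w) = m(w)` if
`ℓ(sw) < ℓ(w)`, for every simple reflection `s`.  Then every generator `m(s)`
is idempotent, and the generators `m(s)`, `s ∈ S`, satisfy the braid
relations of `(W,S)`: for all `i j`, the alternating product of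
`m(sᵢ), m(sⱼ)` of length `M i j` starting with `i` equals the one starting
with `j`. -/
theorem stmt10 {B W : Type*} [Group W] {M : CoxeterMatrix B}
    (cs : CoxeterSystem M W) {N : Type*} [Monoid N] (m : W → N)
    (hgt : ∀ (i : B) (w : W), cs.length (cs.simple i * w) > cs.length w →
      m (cs.simple i) * m w = m (cs.simple i * w))
    (hlt : ∀ (i : B) (w : W), cs.length (cs.simple i * w) < cs.length w →
      m (cs.simple i) * m w = m w) :
    (∀ i : B, m (cs.simple i) * m (cs.simple i) = m (cs.simple i))
    ∧ (∀ i j : B,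
        ((CoxeterSystem.alternatingWord i j (M i j)).map
            (fun k => m (cs.simple k))).prod =
        ((CoxeterSystem.alternatingWord j i (M j i)).map
            (fun k => m (cs.simple k))).prod) := by
  refine ⟨fun i => hlt i _ (by simp), fun i j => ?_⟩
  rcases eq_or_ne (M i j) 0 with h | h
  · simp [h, M.symmetric j i, CoxeterSystem.alternatingWord]
  have h' : M j i ≠ 0 := by rwa [M.symmetric]
  have hne (a b : B) (hab : M a b ≠ 0) : CoxeterSystem.alternatingWord a b (M a b) ≠ [] := by
    simpa [← List.length_eq_zero_iff] using hab
  rw [cs.prod_map_eq_of_isReduced m hgt (cs.isReduced_braidWord h) (hne i j h),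
    cs.prod_map_eq_of_isReduced m hgt (cs.isReduced_braidWord h') (hne j i h')]
  exact congrArg m (cs.wordProd_braidWord_eq i j)
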